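/- Let w be an element of the free group on x1,...,xn with exponent sums e_i of x_i and e_j of x_j. If w' is a conjugate of w, then the coefficient of h_i h_j in the Magnus expansion of w' is congruent to the coefficient of h_i h_j in the Magnus expansion of w, modulo the greatest common divisor of e_i and e_j. -/

import Mathlib

/-!
In degree `≤ 2` the Magnus expansion of `g w g⁻¹` differs from that of `w` only through a
commutator term: writing `a_k`, `b_k` for the degree-one coefficients of `g` and `w`, the
coefficient of `h i h j` changes by `a_i b_j - b_i a_j`. Since the degree-one coefficients
of `w` are its exponent sums `e_i`, `e_j`, this difference is divisible by `gcd(e_i, e_j)`.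
-/

/-- The degree `≤ 2` truncation of the ring of formal power series in the
noncommuting variables `h 0, ..., h (n-1)` over `ℤ`: `c0` is the constant
coefficient, `c1 i` the coefficient of `h i`, and `c2 i j` the coefficient of
the monomial `h i * h j`. -/
structure Trunc2 (n : ℕ) where
  c0 : ℤ
  c1 : Fin n → ℤ
  c2 : Fin n → Fin n → ℤ

namespace Trunc2

variable {n : ℕ}

@[ext] theorem ext {a b : Trunc2 n} (h0 : a.c0 = b.c0) (h1 : ∀ i, a.c1 i = b.c1 i)
    (h2 : ∀ i j, a.c2 i j = b.c2 i j) : a = b := by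
  cases a; cases b
  simp only [mk.injEq]
  exact ⟨h0, funext h1, funext fun i => funext (h2 i)⟩

instance : One (Trunc2 n) := ⟨⟨1, 0, 0⟩⟩

/-- Multiplication of truncated noncommutative power series. -/
instance : Mul (Trunc2 n) :=
  ⟨fun a b => ⟨a.c0 * b.c0,
    fun i => a.c0 * b.c1 i + b.c0 * a.c1 i,
    fun i j => a.c0 * b.c2 i j + b.c0 * a.c2 i j + a.c1 i * b.c1 j⟩⟩

@[simp] theorem one_c0 : (1 : Trunc2 n).c0 = 1 := rfl
@[simp] theorem one_c1 (i : Fin n) : (1 : Trunc2 n).c1 i = 0 := rfl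
@[simp] theorem one_c2 (i j : Fin n) : (1 : Trunc2 n).c2 i j = 0 := rfl
@[simp] theorem mul_c0 (a b : Trunc2 n) : (a * b).c0 = a.c0 * b.c0 := rfl
@[simp] theorem mul_c1 (a b : Trunc2 n) (i : Fin n) :
    (a * b).c1 i = a.c0 * b.c1 i + b.c0 * a.c1 i := rfl
@[simp] theorem mul_c2 (a b : Trunc2 n) (i j : Fin n) :
    (a * b).c2 i j = a.c0 * b.c2 i j + b.c0 * a.c2 i j + a.c1 i * b.c1 j := rfl

instance : Monoid (Trunc2 n) where
  mul_assoc a b c := by ext <;> simp <;> ring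
  one_mul a := by ext <;> simp
  mul_one a := by ext <;> simp

/-- The (truncated) Magnus image `1 + h k` of the generator `x k`, together with
its inverse `1 - h k + h k * h k`. -/
def gen (k : Fin n) : (Trunc2 n)ˣ where
  val := ⟨1, (Pi.single k 1 : Fin n → ℤ), 0⟩
  inv := ⟨1, -(Pi.single k 1 : Fin n → ℤ),
    fun i j => (Pi.single k 1 : Fin n → ℤ) i * (Pi.single k 1 : Fin n → ℤ) j⟩
  val_inv := by ext <;> simp
  inv_val := by ext <;> simp

/-- The Magnus expansion (truncated in degree `≤ 2`): the homomorphism from the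
free group on `x 0, ..., x (n-1)` determined by `x k ↦ 1 + h k`
(so `(x k)⁻¹ ↦ 1 - h k + h k ^ 2 - ⋯`). -/
noncomputable def magnus : FreeGroup (Fin n) →* (Trunc2 n)ˣ := FreeGroup.lift gen

/-- The coefficient of `h i` in the Magnus expansion of `w`. -/
noncomputable def magnusCoeff1 (i : Fin n) (w : FreeGroup (Fin n)) : ℤ :=
  ((magnus w : (Trunc2 n)ˣ) : Trunc2 n).c1 i

/-- The coefficient of the monomial `h i * h j` in the Magnus expansion of `w`. -/
noncomputable def magnusCoeff2 (i j : Fin n) (w : FreeGroup (Fin n)) : ℤ :=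
  ((magnus w : (Trunc2 n)ˣ) : Trunc2 n).c2 i j

end Trunc2

open Trunc2 FreeGroup

/-- The exponent sum of the generator `x i` in a word of the free group,
i.e. the `i`-th coordinate of the image of the word under the abelianization
map to `ℤ^n`. -/
noncomputable def expSum {n : ℕ} (i : Fin n) : FreeGroup (Fin n) →* Multiplicative ℤ :=
  FreeGroup.lift (fun j => Multiplicative.ofAdd (if j = i then (1 : ℤ) else 0))

namespace Trunc2

variable {n : ℕ}

section UnitsWithConstantOne

variable {u v : (Trunc2 n)ˣ}

theorem inv_c0 (hu : (u : Trunc2 n).c0 = 1) : (↑u⁻¹ : Trunc2 n).c0 = 1 := by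
  have h := congrArg c0 u.mul_inv
  rwa [mul_c0, hu, one_mul] at h

theorem inv_c1 (hu : (u : Trunc2 n).c0 = 1) (i : Fin n) :
    (↑u⁻¹ : Trunc2 n).c1 i = -(u : Trunc2 n).c1 i := by
  have h := congrArg (c1 · i) u.mul_inv
  simp only [mul_c1, one_c1, hu, inv_c0 hu, one_mul] at h
  linarith

theorem inv_c2 (hu : (u : Trunc2 n).c0 = 1) (i j : Fin n) :
    (↑u⁻¹ : Trunc2 n).c2 i j =
      -(u : Trunc2 n).c2 i j + (u : Trunc2 n).c1 i * (u : Trunc2 n).c1 j := by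
  have h := congrArg (c2 · i j) u.mul_inv
  simp only [mul_c2, one_c2, hu, inv_c0 hu, inv_c1 hu, one_mul] at h
  linarith

theorem conj_c2_sub (hu : (u : Trunc2 n).c0 = 1) (hv : (v : Trunc2 n).c0 = 1) (i j : Fin n) :
    (↑(u * v * u⁻¹) : Trunc2 n).c2 i j - (v : Trunc2 n).c2 i j =
      (u : Trunc2 n).c1 i * (v : Trunc2 n).c1 j - (v : Trunc2 n).c1 i * (u : Trunc2 n).c1 j := by
  simp only [Units.val_mul, mul_c2, mul_c1, mul_c0, inv_c0 hu, inv_c1 hu, inv_c2 hu, hu, hv,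
    one_mul]
  ring

end UnitsWithConstantOne

theorem magnus_of (k : Fin n) : magnus (of k) = gen k := lift_apply_of

theorem magnus_c0 (w : FreeGroup (Fin n)) : (magnus w : Trunc2 n).c0 = 1 := by
  induction w using FreeGroup.induction_on with
  | C1 => rfl
  | of k => rw [magnus_of]; rfl
  | inv_of k hk => rw [_root_.map_inv]; exact inv_c0 hk
  | mul v w hv hw => simp [hv, hw]

theorem magnusCoeff1_eq_expSum (i : Fin n) (w : FreeGroup (Fin n)) :
    magnusCoeff1 i w = (expSum i w).toAdd := by
  induction w using FreeGroup.induction_on with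
  | C1 => rfl
  | of k =>
    simp [magnusCoeff1, magnus_of, gen, expSum, Pi.single_apply, eq_comm]
  | inv_of k hk =>
    simp only [magnusCoeff1, _root_.map_inv, inv_c1 (magnus_c0 _), toAdd_inv] at hk ⊢
    rw [hk]
  | mul v w hv hw =>
    simp only [magnusCoeff1, _root_.map_mul, Units.val_mul, mul_c1, magnus_c0, one_mul,
      toAdd_mul] at hv hw ⊢
    rw [hv, hw, add_comm]

theorem magnusCoeff2_conj_sub (i j : Fin n) (g w : FreeGroup (Fin n)) :
    magnusCoeff2 i j (g * w * g⁻¹) - magnusCoeff2 i j w =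
      magnusCoeff1 i g * magnusCoeff1 j w - magnusCoeff1 i w * magnusCoeff1 j g := by
  simpa only [magnusCoeff2, magnusCoeff1, _root_.map_mul, _root_.map_inv] using
    conj_c2_sub (magnus_c0 g) (magnus_c0 w) i j

end Trunc2

/-- if `w'` is conjugate to `w`, then the coefficient of
`h i * h j` in the Magnus expansion of `w'` is congruent to that of `w`
modulo `gcd(e_i, e_j)`, where `e_i, e_j` are the exponent sums of `x i`
and `x j` in `w`. -/
theorem magnusCoeff2_conj_modEq {n : ℕ} (i j : Fin n)
    (w w' : FreeGroup (Fin n)) (h : ∃ g, w' = g * w * g⁻¹) :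
    Int.ModEq
      (Int.gcd (Multiplicative.toAdd (expSum i w)) (Multiplicative.toAdd (expSum j w)) : ℤ)
      (magnusCoeff2 i j w') (magnusCoeff2 i j w) := by
  obtain ⟨g, rfl⟩ := h
  refine (Int.modEq_iff_dvd.mpr ?_).symm
  rw [magnusCoeff2_conj_sub, magnusCoeff1_eq_expSum i w, magnusCoeff1_eq_expSum j w]
  exact dvd_sub (dvd_mul_of_dvd_right (Int.gcd_dvd_right _ _) _)
    (dvd_mul_of_dvd_left (Int.gcd_dvd_left _ _) _)
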